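/- Let q be a prime power and G, H ∈ 𝔽_q^{k×n} be matrices with no zero columns such that G has full row rank k. Let m be a positive integer with m > m_G and m > m_H, and let G', H' ∈ 𝔽_q^{(k+1)×n'} be obtained from G and H by the Construction (with this m). Then (G, H) is in PCE if and only if (G', H') is in LCE. -/

import Mathlib

open scoped Classical

/-- A permutation matrix: exactly one `1` in each row and column, `0` elsewhere. -/
def IsPermMatrix {n : ℕ} {F : Type*} [Field F] (P : Matrix (Fin n) (Fin n) F) : Prop :=
  ∃ σ : Equiv.Perm (Fin n), ∀ i j, P i j = if i = σ j then 1 else 0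

/-- A signed permutation matrix: exactly one nonzero entry in each row and column,
each equal to `1` or `-1`. -/
def IsSignedPermMatrix {n : ℕ} {F : Type*} [Field F] (P : Matrix (Fin n) (Fin n) F) : Prop :=
  ∃ (σ : Equiv.Perm (Fin n)) (ε : Fin n → F),
    (∀ j, ε j = 1 ∨ ε j = -1) ∧ ∀ i j, P i j = if i = σ j then ε j else 0

/-- A monomial matrix: exactly one nonzero entry in each row and column. -/
def IsMonomialMatrix {n : ℕ} {F : Type*} [Field F] (P : Matrix (Fin n) (Fin n) F) : Prop :=
  ∃ (σ : Equiv.Perm (Fin n)) (d : Fin n → F),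
    (∀ j, d j ≠ 0) ∧ ∀ i j, P i j = if i = σ j then d j else 0

/-- Permutation Code Equivalence. -/
def PCE {k n : ℕ} {F : Type*} [Field F] (G H : Matrix (Fin k) (Fin n) F) : Prop :=
  ∃ (S : Matrix (Fin k) (Fin k) F) (P : Matrix (Fin n) (Fin n) F),
    IsUnit S ∧ IsPermMatrix P ∧ S * G * P = H

/-- Signed Permutation Code Equivalence. -/
def SPCE {k n : ℕ} {F : Type*} [Field F] (G H : Matrix (Fin k) (Fin n) F) : Prop :=
  ∃ (S : Matrix (Fin k) (Fin k) F) (P : Matrix (Fin n) (Fin n) F),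
    IsUnit S ∧ IsSignedPermMatrix P ∧ S * G * P = H

/-- Linear Code Equivalence. -/
def LCE {k n : ℕ} {F : Type*} [Field F] (G H : Matrix (Fin k) (Fin n) F) : Prop :=
  ∃ (S : Matrix (Fin k) (Fin k) F) (P : Matrix (Fin n) (Fin n) F),
    IsUnit S ∧ IsMonomialMatrix P ∧ S * G * P = H

/-- The number of column indices `j` such that the `j`-th column of `A` equals `c`. -/
noncomputable def colCount {k n : ℕ} {F : Type*} [Field F]
    (A : Matrix (Fin k) (Fin n) F) (c : Fin k → F) : ℕ :=
  (Finset.univ.filter fun j : Fin n => (fun i => A i j) = c).card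

/-- `m_A`: the maximum number of times a single column appears among the columns of `A`. -/
noncomputable def maxColCount {k n : ℕ} {F : Type*} [Field F] [Fintype F]
    (A : Matrix (Fin k) (Fin n) F) : ℕ :=
  Finset.univ.sup fun c : Fin k → F => colCount A c

/-- The Construction: `A' = [A'_1 | A'_2 | A'_3]` of size `(k+1) × (n + 2nm + 1)`, where
`A'_1` is `A` with a row of ones appended, `A'_2` is `Â` (each column of `A` repeated `m`
consecutive times) with a row of zeros appended, and `A'_3` has last row all ones and zeros
elsewhere. -/
def construct {k n : ℕ} {F : Type*} [Field F] (A : Matrix (Fin k) (Fin n) F) (m : ℕ) :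
    Matrix (Fin (k + 1)) (Fin (n + 2 * (n * m) + 1)) F :=
  fun i j =>
    if hj1 : (j : ℕ) < n then
      -- block A'_1
      if hi : (i : ℕ) < k then A ⟨i, hi⟩ ⟨j, hj1⟩ else 1
    else if hj2 : (j : ℕ) < n + n * m then
      -- block A'_2
      if hi : (i : ℕ) < k then
        A ⟨i, hi⟩ ⟨((j : ℕ) - n) / m, by
          have hm : 0 < m := by
            rcases Nat.eq_zero_or_pos m with h | h
            · subst h; omega
            · exact h
          exact (Nat.div_lt_iff_lt_mul hm).mpr (by omega)⟩
      else 0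
    else
      -- block A'_3
      if (i : ℕ) < k then 0 else 1

section Aux
variable {k n m : ℕ} {F : Type*} [Field F]

def emb1 (m : ℕ) (j : Fin n) : Fin (n + 2*(n*m) + 1) := ⟨j, by have := j.2; omega⟩

def emb2 (j : Fin n) (r : Fin m) : Fin (n + 2*(n*m) + 1) :=
  ⟨n + ((j:ℕ)*m + r), by
    have h1 := j.2; have h2 := r.2
    have : (j:ℕ)*m + r < n*m := by
      calc (j:ℕ)*m + r < ((j:ℕ)+1)*m := by rw [add_mul, one_mul]; omega
        _ ≤ n*m := Nat.mul_le_mul_right _ h1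
    omega⟩

def emb3 (n m : ℕ) (t : Fin (n*m + 1)) : Fin (n + 2*(n*m) + 1) :=
  ⟨n + n*m + t, by have := t.2; omega⟩

lemma emb1_inj : Function.Injective (emb1 m (n := n)) := by
  intro a b h; have := congrArg Fin.val h; exact Fin.ext this

lemma emb3_inj : Function.Injective (emb3 n m) := by
  intro a b h; have := congrArg Fin.val h; simp only [emb3] at this; exact Fin.ext (by omega)

lemma emb2_inj : Function.Injective (fun p : Fin n × Fin m => emb2 p.1 p.2) := by
  intro ⟨a, r⟩ ⟨b, s⟩ h
  have hh := congrArg Fin.val h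
  simp only [emb2] at hh
  have h2 : (a:ℕ)*m + r = (b:ℕ)*m + s := by omega
  have hr := r.2; have hs := s.2
  have hab : (a:ℕ) = b := by
    have := Nat.add_mul_div_right (r:ℕ) (a:ℕ) (show 0 < m by omega)
    have := Nat.add_mul_div_right (s:ℕ) (b:ℕ) (show 0 < m by omega)
    have e : ((a:ℕ)*m + r)/m = a := by
      rw [add_comm, Nat.add_mul_div_right _ _ (show 0 < m by omega), Nat.div_eq_of_lt hr]; omega
    have e2 : ((b:ℕ)*m + s)/m = b := by
      rw [add_comm, Nat.add_mul_div_right _ _ (show 0 < m by omega), Nat.div_eq_of_lt hs]; omega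
    rw [← e, ← e2, h2]
  have : (r:ℕ) = s := by rw [hab] at h2; omega
  simp only [Prod.mk.injEq]
  exact ⟨Fin.ext hab, Fin.ext this⟩

lemma construct_b1 (A : Matrix (Fin k) (Fin n) F) (i : Fin (k+1))
    (l : Fin (n + 2*(n*m) + 1)) (hl : (l:ℕ) < n) :
    construct A m i l = if h : (i:ℕ) < k then A ⟨i,h⟩ ⟨l, hl⟩ else 1 := by
  simp only [construct, dif_pos hl]

lemma construct_b2 (A : Matrix (Fin k) (Fin n) F) (i : Fin (k+1))
    (l : Fin (n + 2*(n*m) + 1)) (j : Fin n) (r : Fin m) (hl : (l:ℕ) = n + ((j:ℕ)*m + r)) :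
    construct A m i l = if h : (i:ℕ) < k then A ⟨i,h⟩ j else 0 := by
  have hm : 0 < m := by have := r.2; omega
  have h1 : ¬ ((l:ℕ) < n) := by omega
  have hjm : (j:ℕ)*m + (r:ℕ) < n*m := by
    calc (j:ℕ)*m + r < ((j:ℕ)+1)*m := by rw [add_mul, one_mul]; have := r.2; omega
      _ ≤ n*m := Nat.mul_le_mul_right _ j.2
  have h2 : (l:ℕ) < n + n*m := by omega
  simp only [construct, dif_neg h1, dif_pos h2]
  by_cases h : (i:ℕ) < k
  · rw [dif_pos h, dif_pos h]
    congr 1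
    apply Fin.ext
    show ((l:ℕ) - n) / m = j
    rw [hl]
    simp only [Nat.add_sub_cancel_left]
    rw [add_comm, Nat.add_mul_div_right _ _ hm, Nat.div_eq_of_lt r.2]; omega
  · rw [dif_neg h, dif_neg h]

lemma construct_b3 (A : Matrix (Fin k) (Fin n) F) (i : Fin (k+1))
    (l : Fin (n + 2*(n*m) + 1)) (hl : n + n*m ≤ (l:ℕ)) :
    construct A m i l = if (i:ℕ) < k then 0 else 1 := by
  have h1 : ¬ ((l:ℕ) < n) := by have := Nat.zero_le (n*m); omega
  have h2 : ¬ ((l:ℕ) < n + n*m) := by omega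
  simp only [construct, dif_neg h1, dif_neg h2]

lemma index_trichotomy (hm : 0 < m) (l : Fin (n + 2*(n*m) + 1)) :
    ((l:ℕ) < n) ∨ (∃ (j : Fin n) (r : Fin m), (l:ℕ) = n + ((j:ℕ)*m + r)) ∨ (n + n*m ≤ (l:ℕ)) := by
  by_cases h1 : (l:ℕ) < n
  · exact Or.inl h1
  by_cases h2 : (l:ℕ) < n + n*m
  · refine Or.inr (Or.inl ?_)
    set t := (l:ℕ) - n with ht
    have htm : t < n*m := by omega
    have hjn : t/m < n := by
      rw [Nat.div_lt_iff_lt_mul hm]; exact lt_of_lt_of_le htm (by rw [mul_comm])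
    refine ⟨⟨t/m, hjn⟩, ⟨t % m, Nat.mod_lt _ hm⟩, ?_⟩
    show (l:ℕ) = n + ((t/m)*m + t % m)
    have h4 := Nat.div_add_mod t m
    have h5 : (t/m)*m = m*(t/m) := mul_comm _ _
    omega
  · exact Or.inr (Or.inr (by omega))

end Aux
section Aux2
variable {n m : ℕ} {F : Type*} [Field F]

lemma mul_monomial_apply {K M : ℕ} (S : Matrix (Fin K) (Fin K) F)
    (P : Matrix (Fin M) (Fin M) F)
    (Gp Hp : Matrix (Fin K) (Fin M) F)
    (σ : Equiv.Perm (Fin M)) (d : Fin M → F)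
    (hP : ∀ i j, P i j = if i = σ j then d j else 0)
    (hSGP : S * Gp * P = Hp) :
    ∀ i j, Hp i j = d j * ∑ t, S i t * Gp t (σ j) := by
  intro i j
  rw [← hSGP, Matrix.mul_apply]
  simp only [Matrix.mul_apply, hP]
  rw [Finset.sum_eq_single (σ j)]
  · rw [if_pos rfl]; ring
  · intro b _ hb; rw [if_neg hb, mul_zero]
  · intro h; exact absurd (Finset.mem_univ _) h

lemma B3_eq_image : (Finset.univ.filter (fun l : Fin (n+2*(n*m)+1) => n + n*m ≤ (l:ℕ)))
    = Finset.image (emb3 n m) Finset.univ := by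
  ext l
  simp only [Finset.mem_filter, Finset.mem_univ, true_and, Finset.mem_image]
  constructor
  · intro h
    refine ⟨⟨(l:ℕ) - (n + n*m), by have := l.2; omega⟩, ?_⟩
    apply Fin.ext; show n + n*m + ((l:ℕ) - (n+n*m)) = (l:ℕ); omega
  · rintro ⟨t, rfl⟩; show n + n*m ≤ n + n*m + (t:ℕ); omega

lemma card_B3 : (Finset.univ.filter (fun l : Fin (n+2*(n*m)+1) => n + n*m ≤ (l:ℕ))).card
    = n*m + 1 := by
  rw [B3_eq_image, Finset.card_image_of_injective _ emb3_inj, Finset.card_univ, Fintype.card_fin]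

lemma B1_eq_image : (Finset.univ.filter (fun l : Fin (n+2*(n*m)+1) => (l:ℕ) < n))
    = Finset.image (emb1 m) Finset.univ := by
  ext l
  simp only [Finset.mem_filter, Finset.mem_univ, true_and, Finset.mem_image]
  constructor
  · intro h
    exact ⟨⟨l, h⟩, Fin.ext rfl⟩
  · rintro ⟨t, rfl⟩; exact t.2

lemma card_B1 : (Finset.univ.filter (fun l : Fin (n+2*(n*m)+1) => (l:ℕ) < n)).card = n := by
  rw [B1_eq_image, Finset.card_image_of_injective _ emb1_inj, Finset.card_univ, Fintype.card_fin]

lemma B2_eq_image (hm : 0 < m) :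
    (Finset.univ.filter (fun l : Fin (n+2*(n*m)+1) => n ≤ (l:ℕ) ∧ (l:ℕ) < n + n*m))
    = Finset.image (fun p : Fin n × Fin m => emb2 p.1 p.2) Finset.univ := by
  ext l
  simp only [Finset.mem_filter, Finset.mem_univ, true_and, Finset.mem_image]
  constructor
  · rintro ⟨h1, h2⟩
    rcases index_trichotomy hm l with h | ⟨j, r, hl⟩ | h
    · omega
    · exact ⟨(j, r), Fin.ext hl.symm⟩
    · omega
  · rintro ⟨⟨j, r⟩, rfl⟩
    constructor
    · show n ≤ n + ((j:ℕ)*m + r); omega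
    · show n + ((j:ℕ)*m + (r:ℕ)) < n + n*m
      have : (j:ℕ)*m + r < n*m := by
        calc (j:ℕ)*m + r < ((j:ℕ)+1)*m := by rw [add_mul, one_mul]; have := r.2; omega
          _ ≤ n*m := Nat.mul_le_mul_right _ j.2
      omega

lemma card_B2 (hm : 0 < m) :
    (Finset.univ.filter (fun l : Fin (n+2*(n*m)+1) => n ≤ (l:ℕ) ∧ (l:ℕ) < n + n*m)).card
    = n*m := by
  rw [B2_eq_image hm, Finset.card_image_of_injective _ emb2_inj, Finset.card_univ,
    Fintype.card_prod, Fintype.card_fin, Fintype.card_fin]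

end Aux2
section Aux3
variable {k n m : ℕ} {F : Type*} [Field F]

lemma c1_top (A : Matrix (Fin k) (Fin n) F) (t : Fin k) (j : Fin n) :
    construct A m (t.castSucc) (emb1 m j) = A t j := by
  rw [construct_b1 A _ _ j.2]
  rw [dif_pos (show ((t.castSucc : Fin (k+1)):ℕ) < k from t.2)]
  exact congrArg₂ A (Fin.ext rfl) (Fin.ext rfl)

lemma c1_bot (A : Matrix (Fin k) (Fin n) F) (j : Fin n) :
    construct A m (Fin.last k) (emb1 m j) = 1 := by
  rw [construct_b1 A _ _ j.2, dif_neg (show ¬ ((Fin.last k : Fin (k+1)):ℕ) < k by simp)]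

lemma c2_top (A : Matrix (Fin k) (Fin n) F) (t : Fin k) (j : Fin n) (r : Fin m) :
    construct A m (t.castSucc) (emb2 j r) = A t j := by
  rw [construct_b2 A _ _ j r rfl]
  rw [dif_pos (show ((t.castSucc : Fin (k+1)):ℕ) < k from t.2)]
  exact congrArg (fun x => A x j) (Fin.ext rfl)

lemma c2_bot (A : Matrix (Fin k) (Fin n) F) (j : Fin n) (r : Fin m) :
    construct A m (Fin.last k) (emb2 j r) = 0 := by
  rw [construct_b2 A _ _ j r rfl, dif_neg (show ¬ ((Fin.last k : Fin (k+1)):ℕ) < k by simp)]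

lemma c3_top (A : Matrix (Fin k) (Fin n) F) (t : Fin k) (u : Fin (n*m+1)) :
    construct A m (t.castSucc) (emb3 n m u) = 0 := by
  rw [construct_b3 A _ _ (show n + n*m ≤ ((emb3 n m u : Fin _):ℕ) from by
    show n + n*m ≤ n + n*m + (u:ℕ); omega)]
  rw [if_pos (show ((t.castSucc : Fin (k+1)):ℕ) < k from t.2)]

lemma c3_bot (A : Matrix (Fin k) (Fin n) F) (u : Fin (n*m+1)) :
    construct A m (Fin.last k) (emb3 n m u) = 1 := by
  rw [construct_b3 A _ _ (show n + n*m ≤ ((emb3 n m u : Fin _):ℕ) from by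
    show n + n*m ≤ n + n*m + (u:ℕ); omega)]
  rw [if_neg (show ¬ ((Fin.last k : Fin (k+1)):ℕ) < k by simp)]

/-- Extend a `k × k` matrix to `(k+1) × (k+1)` with a `1` in the corner. -/
def extendM (A : Matrix (Fin k) (Fin k) F) : Matrix (Fin (k+1)) (Fin (k+1)) F :=
  fun i j =>
    if hi : (i:ℕ) < k then (if hj : (j:ℕ) < k then A ⟨i,hi⟩ ⟨j,hj⟩ else 0)
    else (if (j:ℕ) < k then 0 else 1)

lemma extendM_tt (A : Matrix (Fin k) (Fin k) F) (a b : Fin k) :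
    extendM A a.castSucc b.castSucc = A a b := by
  unfold extendM
  rw [dif_pos (show ((a.castSucc : Fin (k+1)):ℕ) < k from a.2),
    dif_pos (show ((b.castSucc : Fin (k+1)):ℕ) < k from b.2)]
  exact congrArg₂ A (Fin.ext rfl) (Fin.ext rfl)

lemma extendM_tb (A : Matrix (Fin k) (Fin k) F) (a : Fin k) :
    extendM A a.castSucc (Fin.last k) = 0 := by
  unfold extendM
  rw [dif_pos (show ((a.castSucc : Fin (k+1)):ℕ) < k from a.2),
    dif_neg (show ¬ ((Fin.last k : Fin (k+1)):ℕ) < k by simp)]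

lemma extendM_bt (A : Matrix (Fin k) (Fin k) F) (b : Fin k) :
    extendM A (Fin.last k) b.castSucc = 0 := by
  unfold extendM
  rw [dif_neg (show ¬ ((Fin.last k : Fin (k+1)):ℕ) < k by simp),
    if_pos (show ((b.castSucc : Fin (k+1)):ℕ) < k from b.2)]

lemma extendM_bb (A : Matrix (Fin k) (Fin k) F) :
    extendM A (Fin.last k) (Fin.last k) = 1 := by
  unfold extendM
  rw [dif_neg (show ¬ ((Fin.last k : Fin (k+1)):ℕ) < k by simp),
    if_neg (show ¬ ((Fin.last k : Fin (k+1)):ℕ) < k by simp)]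

lemma extendM_mul (A B : Matrix (Fin k) (Fin k) F) :
    extendM A * extendM B = extendM (A * B) := by
  ext a b
  rw [Matrix.mul_apply, Fin.sum_univ_castSucc]
  induction a using Fin.lastCases with
  | last =>
    induction b using Fin.lastCases with
    | last => simp [extendM_bt, extendM_bb, extendM_tb]
    | cast b => simp [extendM_bt, extendM_bb, extendM_tb]
  | cast a =>
    induction b using Fin.lastCases with
    | last => simp [extendM_tt, extendM_tb, extendM_bb, extendM_bt]
    | cast b => simp [extendM_tt, extendM_tb, extendM_bt, Matrix.mul_apply]

lemma extendM_one : extendM (1 : Matrix (Fin k) (Fin k) F) = 1 := by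
  ext a b
  induction a using Fin.lastCases with
  | last =>
    induction b using Fin.lastCases with
    | last => simp [extendM_bb, Matrix.one_apply]
    | cast b => simp [extendM_bt, Matrix.one_apply, (Fin.castSucc_lt_last b).ne']
  | cast a =>
    induction b using Fin.lastCases with
    | last => simp [extendM_tb, Matrix.one_apply, (Fin.castSucc_lt_last a).ne]
    | cast b => simp [extendM_tt, Matrix.one_apply, Fin.castSucc_inj]

lemma extendM_isUnit {A : Matrix (Fin k) (Fin k) F} (h : IsUnit A) : IsUnit (extendM A) := by
  obtain ⟨u, rfl⟩ := h
  rw [Matrix.isUnit_iff_isUnit_det]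
  apply Matrix.isUnit_det_of_right_inverse (B := extendM (↑u⁻¹ : Matrix (Fin k) (Fin k) F))
  rw [extendM_mul, ← Units.val_mul, mul_inv_cancel, Units.val_one, extendM_one]

/-- The extension of a permutation of `Fin n` to the index set of the construction. -/
def fext (m : ℕ) (hm : 0 < m) (π : Equiv.Perm (Fin n)) (l : Fin (n + 2*(n*m) + 1)) :
    Fin (n + 2*(n*m) + 1) :=
  if h : (l:ℕ) < n then emb1 m (π ⟨l, h⟩)
  else if h2 : (l:ℕ) < n + n*m then
    emb2 (π ⟨((l:ℕ) - n)/m, (Nat.div_lt_iff_lt_mul hm).mpr (by omega)⟩)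
      ⟨((l:ℕ) - n) % m, Nat.mod_lt _ hm⟩
  else l

lemma fext_emb1 (hm : 0 < m) (π : Equiv.Perm (Fin n)) (j : Fin n) :
    fext m hm π (emb1 m j) = emb1 m (π j) := by
  rw [fext, dif_pos (show ((emb1 m j : Fin _):ℕ) < n from j.2)]
  exact congrArg (fun x => emb1 m (π x)) (Fin.ext rfl)

lemma fext_emb2 (hm : 0 < m) (π : Equiv.Perm (Fin n)) (j : Fin n) (r : Fin m) :
    fext m hm π (emb2 j r) = emb2 (π j) r := by
  have hb : (j:ℕ)*m + (r:ℕ) < n*m := by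
    calc (j:ℕ)*m + r < ((j:ℕ)+1)*m := by rw [add_mul, one_mul]; have := r.2; omega
      _ ≤ n*m := Nat.mul_le_mul_right _ j.2
  have h1 : ¬ ((emb2 j r : Fin _):ℕ) < n := by show ¬ (n + ((j:ℕ)*m + r) < n); omega
  have h2 : ((emb2 j r : Fin _):ℕ) < n + n*m := by show n + ((j:ℕ)*m + (r:ℕ)) < n + n*m; omega
  rw [fext, dif_neg h1, dif_pos h2]
  have ha : (((emb2 j r : Fin _):ℕ) - n)/m = (j:ℕ) := by
    show ((n + ((j:ℕ)*m + r)) - n)/m = (j:ℕ)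
    rw [Nat.add_sub_cancel_left, add_comm, Nat.add_mul_div_right _ _ hm, Nat.div_eq_of_lt r.2]
    omega
  have hbb : (((emb2 j r : Fin _):ℕ) - n) % m = (r:ℕ) := by
    show ((n + ((j:ℕ)*m + r)) - n) % m = (r:ℕ)
    rw [Nat.add_sub_cancel_left, add_comm, Nat.add_mul_mod_self_right, Nat.mod_eq_of_lt r.2]
  exact congrArg₂ (fun (a : Fin n) (b : Fin m) => emb2 (π a) b) (Fin.ext ha) (Fin.ext hbb)

lemma fext_fix (hm : 0 < m) (π : Equiv.Perm (Fin n)) (l : Fin (n + 2*(n*m) + 1))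
    (h : n + n*m ≤ (l:ℕ)) : fext m hm π l = l := by
  rw [fext, dif_neg (by omega), dif_neg (by omega)]

lemma emb2_val_lt (j : Fin n) (r : Fin m) : ((emb2 j r : Fin (n+2*(n*m)+1)):ℕ) < n + n*m := by
  have hb : (j:ℕ)*m + (r:ℕ) < n*m := by
    calc (j:ℕ)*m + r < ((j:ℕ)+1)*m := by rw [add_mul, one_mul]; have := r.2; omega
      _ ≤ n*m := Nat.mul_le_mul_right _ j.2
  show n + ((j:ℕ)*m + (r:ℕ)) < n + n*m; omega

lemma fext_inj (hm : 0 < m) (π : Equiv.Perm (Fin n)) : Function.Injective (fext m hm π) := by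
  intro a b h
  rcases index_trichotomy hm a with ha | ⟨ja, ra, ha⟩ | ha <;>
    rcases index_trichotomy hm b with hb | ⟨jb, rb, hb⟩ | hb
  · rw [show a = emb1 m ⟨a, ha⟩ from Fin.ext rfl, show b = emb1 m ⟨b, hb⟩ from Fin.ext rfl] at h ⊢
    rw [fext_emb1, fext_emb1] at h
    exact congrArg (emb1 m) (π.injective (emb1_inj h))
  · rw [show a = emb1 m ⟨a, ha⟩ from Fin.ext rfl, show b = emb2 jb rb from Fin.ext hb] at h
    rw [fext_emb1, fext_emb2] at h
    have := congrArg Fin.val h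
    have h1 : ((emb1 m (π ⟨a, ha⟩) : Fin _):ℕ) < n := (π _).2
    have h2 : ¬ ((emb2 (π jb) rb : Fin _):ℕ) < n := by show ¬ (n + _ < n); omega
    omega
  · rw [show a = emb1 m ⟨a, ha⟩ from Fin.ext rfl] at h
    rw [fext_emb1, fext_fix hm π b hb] at h
    have := congrArg Fin.val h
    have h1 : ((emb1 m (π ⟨a, ha⟩) : Fin _):ℕ) < n := (π _).2
    omega
  · rw [show a = emb2 ja ra from Fin.ext ha, show b = emb1 m ⟨b, hb⟩ from Fin.ext rfl] at h
    rw [fext_emb2, fext_emb1] at h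
    have := congrArg Fin.val h
    have h1 : ((emb1 m (π ⟨b, hb⟩) : Fin _):ℕ) < n := (π _).2
    have h2 : ¬ ((emb2 (π ja) ra : Fin _):ℕ) < n := by show ¬ (n + _ < n); omega
    omega
  · rw [show a = emb2 ja ra from Fin.ext ha, show b = emb2 jb rb from Fin.ext hb] at h ⊢
    rw [fext_emb2, fext_emb2] at h
    have := emb2_inj (show (fun p : Fin n × Fin m => emb2 p.1 p.2) (π ja, ra)
      = (fun p : Fin n × Fin m => emb2 p.1 p.2) (π jb, rb) from h)
    simp only [Prod.mk.injEq] at this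
    rw [π.injective this.1, this.2]
  · rw [show a = emb2 ja ra from Fin.ext ha] at h
    rw [fext_emb2, fext_fix hm π b hb] at h
    have := congrArg Fin.val h
    have h2 := emb2_val_lt (π ja) ra
    omega
  · rw [show b = emb1 m ⟨b, hb⟩ from Fin.ext rfl] at h
    rw [fext_fix hm π a ha, fext_emb1] at h
    have := congrArg Fin.val h
    have h1 : ((emb1 m (π ⟨b, hb⟩) : Fin _):ℕ) < n := (π _).2
    omega
  · rw [show b = emb2 jb rb from Fin.ext hb] at h
    rw [fext_fix hm π a ha, fext_emb2] at h
    have := congrArg Fin.val h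
    have h2 := emb2_val_lt (π jb) rb
    omega
  · rw [fext_fix hm π a ha, fext_fix hm π b hb] at h
    exact h

end Aux3
section Fwd
variable {k n m : ℕ} {F : Type*} [Field F]

lemma forward_dir (hm : 0 < m) (G H : Matrix (Fin k) (Fin n) F) (h : PCE G H) :
    LCE (construct G m) (construct H m) := by
  obtain ⟨S, P, hS, ⟨π, hPdef⟩, hSGP⟩ := h
  have hH : ∀ a b, H a b = ∑ t, S a t * G t (π b) := by
    intro a b
    have := mul_monomial_apply S P G H π (fun _ => (1:F)) (fun i j => by rw [hPdef]) hSGP a b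
    rw [this, one_mul]
  set σ' : Equiv.Perm (Fin (n + 2*(n*m) + 1)) :=
    Equiv.ofBijective (fext m hm π) (Finite.injective_iff_bijective.mp (fext_inj hm π)) with hσ'
  have hσapp : ∀ l, σ' l = fext m hm π l := fun l => rfl
  set P' : Matrix (Fin (n + 2*(n*m) + 1)) (Fin (n + 2*(n*m) + 1)) F :=
    (fun i j => if i = σ' j then 1 else 0) with hP'
  refine ⟨extendM S, P', extendM_isUnit hS,
    ⟨σ', fun _ => 1, fun _ => one_ne_zero, fun i j => rfl⟩, ?_⟩
  ext i l
  have key : (extendM S * construct G m * P') i l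
      = ∑ t, extendM S i t * construct G m t (σ' l) := by
    rw [Matrix.mul_apply]
    simp only [hP', mul_ite, mul_one, mul_zero]
    rw [Finset.sum_ite_eq' Finset.univ (σ' l) (fun t => (extendM S * construct G m) i t)]
    rw [if_pos (Finset.mem_univ _), Matrix.mul_apply]
  rw [key, hσapp]
  rcases index_trichotomy hm l with hl | ⟨j, r, hl⟩ | hl
  · rw [show l = emb1 m ⟨l, hl⟩ from Fin.ext rfl, fext_emb1]
    induction i using Fin.lastCases with
    | last =>
      rw [Fin.sum_univ_castSucc]
      simp [extendM_bt, extendM_bb, c1_bot]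
    | cast i =>
      rw [Fin.sum_univ_castSucc]
      simp only [extendM_tt, extendM_tb, zero_mul, add_zero, c1_top]

      exact (hH i _).symm
  · rw [show l = emb2 j r from Fin.ext hl, fext_emb2]
    induction i using Fin.lastCases with
    | last =>
      rw [Fin.sum_univ_castSucc]
      simp [extendM_bt, extendM_bb, c2_bot]
    | cast i =>
      rw [Fin.sum_univ_castSucc]
      simp only [extendM_tt, extendM_tb, zero_mul, add_zero, c2_top]

      exact (hH i _).symm
  · rw [fext_fix hm π l hl]
    have hG3 : ∀ t : Fin (k+1), construct G m t l = if (t:ℕ) < k then 0 else 1 :=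
      fun t => construct_b3 G t l hl
    have hH3 : ∀ t : Fin (k+1), construct H m t l = if (t:ℕ) < k then 0 else 1 :=
      fun t => construct_b3 H t l hl
    simp only [hG3, hH3]
    induction i using Fin.lastCases with
    | last =>
      rw [Fin.sum_univ_castSucc]
      simp [extendM_bt, extendM_bb, Fin.is_lt]
    | cast i =>
      rw [Fin.sum_univ_castSucc]
      simp [extendM_tt, extendM_tb, Fin.is_lt]

end Fwd
section Rev
variable {k n m : ℕ} {F : Type*} [Field F]

lemma inv_cancel_sum {K : ℕ} (S T : Matrix (Fin K) (Fin K) F) (hTS : T * S = 1)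
    (g : Fin K → F) (i : Fin K) :
    ∑ t, T i t * (∑ s, S t s * g s) = g i := by
  have h1 : ∀ t, T i t * (∑ s, S t s * g s) = ∑ s, T i t * S t s * g s := by
    intro t; rw [Finset.mul_sum]; apply Finset.sum_congr rfl; intros; ring
  simp only [h1]
  rw [Finset.sum_comm]
  have h2 : ∀ s, ∑ t, T i t * S t s * g s = (T * S) i s * g s := by
    intro s; rw [Matrix.mul_apply, Finset.sum_mul]
  simp only [h2, hTS, Matrix.one_apply, ite_mul, one_mul, zero_mul]
  simp

def elast (k : ℕ) (F : Type*) [Field F] : Fin (k+1) → F := fun t => if (t:ℕ) < k then 0 else 1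

lemma elast_cs (t : Fin k) : elast k F t.castSucc = 0 := if_pos t.2

lemma elast_last : elast k F (Fin.last k) = 1 := if_neg (by simp)

lemma c3' (A : Matrix (Fin k) (Fin n) F) (i : Fin (k+1)) (l : Fin (n + 2*(n*m) + 1))
    (hl : n + n*m ≤ (l:ℕ)) : construct A m i l = elast k F i := construct_b3 A i l hl

lemma reverse_dir [Fintype F] (hk : 0 < k) (hn : 0 < n) (hm : 0 < m)
    (G H : Matrix (Fin k) (Fin n) F)
    (hGnz : ∀ j, (fun i => G i j) ≠ 0)
    (hHnz : ∀ j, (fun i => H i j) ≠ 0)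
    (hGrank : G.rank = k)
    (hmG : maxColCount G < m) (hmH : maxColCount H < m)
    (h : LCE (construct G m) (construct H m)) : PCE G H := by
  obtain ⟨S', P', hS', ⟨σ, d, hd, hPdef⟩, hSGP⟩ := h
  have hcol : ∀ i l, construct H m i l = d l * ∑ t, S' i t * construct G m t (σ l) :=
    mul_monomial_apply S' P' (construct G m) (construct H m) σ d hPdef hSGP
  obtain ⟨u, hu⟩ := hS'
  set T' : Matrix (Fin (k+1)) (Fin (k+1)) F := ↑u⁻¹ with hT'
  have hTS : T' * S' = 1 := by rw [hT', ← hu, ← Units.val_mul, inv_mul_cancel, Units.val_one]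
  have hST : S' * T' = 1 := by rw [hT', ← hu, ← Units.val_mul, mul_inv_cancel, Units.val_one]
  -- invert the column relation
  have hgcol : ∀ l i, construct G m i (σ l) = (d l)⁻¹ * ∑ t, T' i t * construct H m t l := by
    intro l i
    have e1 : ∑ t, T' i t * construct H m t l
        = d l * ∑ t, T' i t * (∑ s, S' t s * construct G m s (σ l)) := by
      rw [Finset.mul_sum]
      apply Finset.sum_congr rfl
      intro t _
      rw [hcol t l]; ring
    rw [e1, inv_cancel_sum S' T' hTS, inv_mul_cancel_left₀ (hd l)]
  set w : Fin (k+1) → F := fun i => ∑ t, T' i t * elast k F t with hw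
  have hA : ∀ (v : Fin (n*m+1)) (i : Fin (k+1)),
      construct G m i (σ (emb3 n m v)) = (d (emb3 n m v))⁻¹ * w i := by
    intro v i
    rw [hgcol (emb3 n m v) i]
    congr 1
    apply Finset.sum_congr rfl
    intro t _
    rw [c3' H t _ (show n + n*m ≤ ((emb3 n m v : Fin _):ℕ) from by
      show n + n*m ≤ n + n*m + (v:ℕ); omega)]
  -- the set of columns of G' proportional to w
  set W : Finset (Fin (n + 2*(n*m) + 1)) :=
    Finset.univ.filter (fun l => ∃ c : F, ∀ i, construct G m i l = c * w i) with hW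
  have hWcard : n*m + 1 ≤ W.card := by
    have hinj : Function.Injective (fun v : Fin (n*m+1) => σ (emb3 n m v)) :=
      fun a b hab => emb3_inj (σ.injective hab)
    have hsub : Finset.image (fun v : Fin (n*m+1) => σ (emb3 n m v)) Finset.univ ⊆ W := by
      intro l hl
      obtain ⟨v, _, rfl⟩ := Finset.mem_image.mp hl
      exact Finset.mem_filter.mpr ⟨Finset.mem_univ _, ⟨(d (emb3 n m v))⁻¹, hA v⟩⟩
    calc n*m + 1 = (Finset.image (fun v : Fin (n*m+1) => σ (emb3 n m v)) Finset.univ).card := by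
          rw [Finset.card_image_of_injective _ hinj, Finset.card_univ, Fintype.card_fin]
      _ ≤ W.card := Finset.card_le_card hsub
  -- Step 1 : the top entries of w vanish
  have hwtop : ∀ i : Fin k, w i.castSucc = 0 := by
    by_contra hcon
    push_neg at hcon
    obtain ⟨i0, hi0⟩ := hcon
    by_cases hwl : w (Fin.last k) = 0
    · -- then W is contained in block 2, of size n*m
      have hsub2 : W ⊆ Finset.univ.filter
          (fun l : Fin (n+2*(n*m)+1) => n ≤ (l:ℕ) ∧ (l:ℕ) < n + n*m) := by
        intro l hl
        obtain ⟨-, c, hc⟩ := Finset.mem_filter.mp hl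
        refine Finset.mem_filter.mpr ⟨Finset.mem_univ _, ?_⟩
        rcases index_trichotomy hm l with h1 | ⟨j, r, h2⟩ | h3
        · exfalso
          have hlast := hc (Fin.last k)
          rw [show l = emb1 m ⟨l, h1⟩ from Fin.ext rfl, c1_bot, hwl, mul_zero] at hlast
          exact one_ne_zero hlast
        · have hb : (l:ℕ) < n + n*m := by
            rw [show l = emb2 j r from Fin.ext h2]; exact emb2_val_lt j r
          omega
        · exfalso
          have hlast := hc (Fin.last k)
          rw [c3' G _ l h3, elast_last, hwl, mul_zero] at hlast
          exact one_ne_zero hlast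
      have hcard2 := Finset.card_le_card hsub2
      rw [card_B2 hm] at hcard2
      omega
    · -- w last ≠ 0 : W is contained in block-1 columns equal to a fixed vector
      set c0 : Fin k → F := fun i => (w (Fin.last k))⁻¹ * w i.castSucc with hc0
      have hsub1 : W ⊆ Finset.image (emb1 m)
          (Finset.univ.filter (fun j : Fin n => (fun i => G i j) = c0)) := by
        intro l hl
        obtain ⟨-, c, hc⟩ := Finset.mem_filter.mp hl
        rcases index_trichotomy hm l with h1 | ⟨j, r, h2⟩ | h3
        · refine Finset.mem_image.mpr ⟨⟨l, h1⟩, ?_, Fin.ext rfl⟩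
          refine Finset.mem_filter.mpr ⟨Finset.mem_univ _, ?_⟩
          have hlast := hc (Fin.last k)
          rw [show l = emb1 m ⟨l, h1⟩ from Fin.ext rfl, c1_bot] at hlast
          have hcval : c = (w (Fin.last k))⁻¹ := by
            have h1 : w (Fin.last k) * c = 1 := by rw [mul_comm]; exact hlast.symm
            exact eq_inv_of_mul_eq_one_right h1
          funext i
          have htop := hc i.castSucc
          rw [show l = emb1 m ⟨l, h1⟩ from Fin.ext rfl, c1_top] at htop
          rw [htop, hcval, hc0]
        · exfalso
          have hlast := hc (Fin.last k)
          rw [show l = emb2 j r from Fin.ext h2, c2_bot] at hlast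
          have hczero : c = 0 := by
            rcases mul_eq_zero.mp hlast.symm with h0 | h0
            · exact h0
            · exact absurd h0 hwl
          apply hGnz j
          funext i
          have htop := hc i.castSucc
          rw [show l = emb2 j r from Fin.ext h2, c2_top, hczero, zero_mul] at htop
          exact htop
        · exfalso
          have hlast := hc (Fin.last k)
          rw [c3' G _ l h3, elast_last] at hlast
          have htop := hc i0.castSucc
          rw [c3' G _ l h3, elast_cs] at htop
          have hcne : c ≠ 0 := fun h0 => one_ne_zero (by rw [h0, zero_mul] at hlast; exact hlast)
          rcases mul_eq_zero.mp htop.symm with h0 | h0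
          · exact hcne h0
          · exact hi0 h0
      have hcard1 := Finset.card_le_card hsub1
      have hcard1' := Finset.card_image_le (f := emb1 m)
        (s := Finset.univ.filter (fun j : Fin n => (fun i => G i j) = c0))
      have h3 : colCount G c0 ≤ maxColCount G := Finset.le_sup (Finset.mem_univ c0)
      have hmn : m ≤ n*m := Nat.le_mul_of_pos_left m hn
      have hcc : (Finset.univ.filter (fun j : Fin n => (fun i => G i j) = c0)).card
          = colCount G c0 := rfl
      omega
  -- consequences: last column of S'
  have hSw : ∀ i, ∑ t, S' i t * w t = elast k F i := by
    intro i
    simp only [hw]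
    exact inv_cancel_sum T' S' hST (elast k F) i
  set α := w (Fin.last k) with hαdef
  have hα : α ≠ 0 := by
    intro h0
    have hw0 : ∀ t, w t = 0 := by
      intro t
      induction t using Fin.lastCases with
      | last => rw [← hαdef]; exact h0
      | cast t => exact hwtop t
    have h1 := hSw (Fin.last k)
    rw [elast_last] at h1
    simp only [hw0, mul_zero, Finset.sum_const_zero] at h1
    exact one_ne_zero h1.symm
  have hwdef : ∀ t, w t = α * elast k F t := by
    intro t
    induction t using Fin.lastCases with
    | last => rw [elast_last, mul_one, hαdef]
    | cast t => rw [elast_cs, mul_zero]; exact hwtop t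
  have hS'col : ∀ i, S' i (Fin.last k) = α⁻¹ * elast k F i := by
    intro i
    have h1 := hSw i
    simp only [hwdef] at h1
    rw [Fin.sum_univ_castSucc] at h1
    simp only [elast_cs, elast_last, mul_zero, mul_one, Finset.sum_const_zero, zero_add] at h1
    rw [← h1, mul_comm (S' i (Fin.last k)) α, inv_mul_cancel_left₀ hα]
  have hS'tb : ∀ i : Fin k, S' i.castSucc (Fin.last k) = 0 := by
    intro i; rw [hS'col, elast_cs, mul_zero]
  set μ := S' (Fin.last k) (Fin.last k) with hμdef
  have hμval : μ = α⁻¹ := by rw [hμdef, hS'col, elast_last, mul_one]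
  have hμ : μ ≠ 0 := by rw [hμval]; exact inv_ne_zero hα
  -- Step 2 : σ maps block 3 onto block 3
  have himg3 : Finset.image (fun v : Fin (n*m+1) => σ (emb3 n m v)) Finset.univ
      = Finset.univ.filter (fun l : Fin (n+2*(n*m)+1) => n + n*m ≤ (l:ℕ)) := by
    apply Finset.eq_of_subset_of_card_le
    · intro l hl
      obtain ⟨v, -, rfl⟩ := Finset.mem_image.mp hl
      refine Finset.mem_filter.mpr ⟨Finset.mem_univ _, ?_⟩
      rcases index_trichotomy hm (σ (emb3 n m v)) with h1 | ⟨j, r, h2⟩ | h3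
      · exfalso
        apply hGnz ⟨σ (emb3 n m v), h1⟩
        funext i'
        have hAv := hA v i'.castSucc
        rw [show σ (emb3 n m v) = emb1 m ⟨σ (emb3 n m v), h1⟩ from Fin.ext rfl, c1_top] at hAv
        rw [hwdef, elast_cs, mul_zero, mul_zero] at hAv
        exact hAv
      · exfalso
        apply hGnz j
        funext i'
        have hAv := hA v i'.castSucc
        rw [show σ (emb3 n m v) = emb2 j r from Fin.ext h2, c2_top] at hAv
        rw [hwdef, elast_cs, mul_zero, mul_zero] at hAv
        exact hAv
      · exact h3
    · rw [card_B3, Finset.card_image_of_injective _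
        (fun a b hab => emb3_inj (σ.injective hab)), Finset.card_univ, Fintype.card_fin]
  have hB3iff : ∀ l, n + n*m ≤ ((σ l : Fin _):ℕ) → n + n*m ≤ (l:ℕ) := by
    intro l hσl
    have hmem : σ l ∈ Finset.image (fun v : Fin (n*m+1) => σ (emb3 n m v)) Finset.univ := by
      rw [himg3]; exact Finset.mem_filter.mpr ⟨Finset.mem_univ _, hσl⟩
    obtain ⟨v, -, hv⟩ := Finset.mem_image.mp hmem
    have hlv : emb3 n m v = l := σ.injective hv
    rw [← hlv]
    show n + n*m ≤ n + n*m + (v:ℕ); omega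
  -- Step 3 : σ maps block 1 into block 1
  have hσ1 : ∀ j : Fin n, ((σ (emb1 m j) : Fin (n+2*(n*m)+1)):ℕ) < n := by
    intro j
    by_contra hge
    have hnb3 : ¬ (n + n*m ≤ ((σ (emb1 m j) : Fin (n+2*(n*m)+1)):ℕ)) := by
      intro h3
      have h4 := hB3iff (emb1 m j) h3
      have h5 : ((emb1 m j : Fin (n+2*(n*m)+1)):ℕ) = (j:ℕ) := rfl
      have := j.2
      omega
    rcases index_trichotomy hm (σ (emb1 m j)) with h1 | ⟨j0, r0, h2⟩ | h3
    · exact hge h1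
    · -- σ (emb1 j) lands in block 2 : contradiction by multiplicity counting
      have hσemb : σ (emb1 m j) = emb2 j0 r0 := Fin.ext h2
      have hSigma : ∀ l i, ∑ t, T' i t * construct H m t l
          = d l * construct G m i (σ l) := by
        intro l i
        rw [hgcol l i, mul_inv_cancel_left₀ (hd l)]
      set U : Finset (Fin (n+2*(n*m)+1)) := Finset.univ.filter
        (fun l => ∃ c : F, ∀ i, construct H m i l = c * construct H m i (emb1 m j)) with hU
      set V : Finset (Fin (n+2*(n*m)+1)) := Finset.univ.filter
        (fun l => ∃ c : F, ∀ i, construct G m i l = c * construct G m i (σ (emb1 m j))) with hV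
      have hUV : ∀ l, l ∈ U ↔ σ l ∈ V := by
        intro l
        simp only [hU, hV, Finset.mem_filter, Finset.mem_univ, true_and]
        constructor
        · rintro ⟨c, hc⟩
          refine ⟨(d l)⁻¹ * c * d (emb1 m j), fun i => ?_⟩
          rw [hgcol l i]
          calc (d l)⁻¹ * ∑ t, T' i t * construct H m t l
              = (d l)⁻¹ * ∑ t, T' i t * (c * construct H m t (emb1 m j)) := by
                congr 1; exact Finset.sum_congr rfl (fun t _ => by rw [hc t])
            _ = (d l)⁻¹ * (c * ∑ t, T' i t * construct H m t (emb1 m j)) := by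
                congr 1; rw [Finset.mul_sum]; exact Finset.sum_congr rfl (fun t _ => by ring)
            _ = (d l)⁻¹ * (c * (d (emb1 m j) * construct G m i (σ (emb1 m j)))) := by
                rw [hSigma]
            _ = ((d l)⁻¹ * c * d (emb1 m j)) * construct G m i (σ (emb1 m j)) := by ring
        · rintro ⟨c, hc⟩
          refine ⟨d l * c * (d (emb1 m j))⁻¹, fun i => ?_⟩
          rw [hcol i l]
          have hinv : ∑ t, S' i t * construct G m t (σ (emb1 m j))
              = (d (emb1 m j))⁻¹ * construct H m i (emb1 m j) := by
            rw [hcol i (emb1 m j), inv_mul_cancel_left₀ (hd (emb1 m j))]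
          calc d l * ∑ t, S' i t * construct G m t (σ l)
              = d l * ∑ t, S' i t * (c * construct G m t (σ (emb1 m j))) := by
                congr 1; exact Finset.sum_congr rfl (fun t _ => by rw [hc t])
            _ = d l * (c * ∑ t, S' i t * construct G m t (σ (emb1 m j))) := by
                congr 1; rw [Finset.mul_sum]; exact Finset.sum_congr rfl (fun t _ => by ring)
            _ = d l * (c * ((d (emb1 m j))⁻¹ * construct H m i (emb1 m j))) := by rw [hinv]
            _ = (d l * c * (d (emb1 m j))⁻¹) * construct H m i (emb1 m j) := by ring
      have hVimg : V = Finset.image (fun l => σ l) U := by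
        ext l'
        constructor
        · intro hv
          refine Finset.mem_image.mpr ⟨σ.symm l', ?_, σ.apply_symm_apply l'⟩
          rw [hUV (σ.symm l'), σ.apply_symm_apply]
          exact hv
        · intro hl'
          obtain ⟨a, ha, rfl⟩ := Finset.mem_image.mp hl'
          exact (hUV a).mp ha
      have hcardUV : V.card = U.card := by
        rw [hVimg, Finset.card_image_of_injective _ σ.injective]
      have hUsub : U ⊆ Finset.image (emb1 m)
          (Finset.univ.filter (fun j' : Fin n => (fun i => H i j') = (fun i => H i j))) := by
        intro l hl
        obtain ⟨-, c, hc⟩ := Finset.mem_filter.mp hl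
        rcases index_trichotomy hm l with h1' | ⟨j', r', h2'⟩ | h3'
        · refine Finset.mem_image.mpr ⟨⟨l, h1'⟩,
            Finset.mem_filter.mpr ⟨Finset.mem_univ _, ?_⟩, Fin.ext rfl⟩
          have hlast := hc (Fin.last k)
          rw [show l = emb1 m ⟨l, h1'⟩ from Fin.ext rfl, c1_bot, c1_bot, mul_one] at hlast
          funext i'
          have htop := hc i'.castSucc
          rw [show l = emb1 m ⟨l, h1'⟩ from Fin.ext rfl, c1_top, c1_top, ← hlast, one_mul] at htop
          exact htop
        · exfalso
          have hlast := hc (Fin.last k)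
          rw [show l = emb2 j' r' from Fin.ext h2', c2_bot, c1_bot, mul_one] at hlast
          apply hHnz j'
          funext i'
          have htop := hc i'.castSucc
          rw [show l = emb2 j' r' from Fin.ext h2', c2_top, c1_top, ← hlast, zero_mul] at htop
          exact htop
        · exfalso
          have hlast := hc (Fin.last k)
          rw [c3' H _ l h3', elast_last, c1_bot, mul_one] at hlast
          apply hHnz j
          funext i'
          have htop := hc i'.castSucc
          rw [c3' H _ l h3', elast_cs, c1_top, ← hlast, one_mul] at htop
          exact htop.symm
      have hUcard : U.card ≤ colCount H (fun i => H i j) := by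
        calc U.card ≤ (Finset.image (emb1 m)
            (Finset.univ.filter (fun j' : Fin n => (fun i => H i j') = (fun i => H i j)))).card :=
              Finset.card_le_card hUsub
          _ ≤ (Finset.univ.filter
              (fun j' : Fin n => (fun i => H i j') = (fun i => H i j))).card :=
              Finset.card_image_le
          _ = colCount H (fun i => H i j) := rfl
      have hVsub : Finset.image (fun r : Fin m => (emb2 j0 r : Fin (n+2*(n*m)+1)))
          Finset.univ ⊆ V := by
        intro l hl
        obtain ⟨r, -, rfl⟩ := Finset.mem_image.mp hl
        refine Finset.mem_filter.mpr ⟨Finset.mem_univ _, 1, fun i => ?_⟩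
        rw [one_mul, hσemb]
        induction i using Fin.lastCases with
        | last => rw [c2_bot, c2_bot]
        | cast i => rw [c2_top, c2_top]
      have hVcard : m ≤ V.card := by
        calc m = (Finset.image (fun r : Fin m => (emb2 j0 r : Fin (n+2*(n*m)+1)))
              Finset.univ).card := by
              rw [Finset.card_image_of_injective _ (fun a b hab => ?_), Finset.card_univ,
                Fintype.card_fin]
              have := emb2_inj (show (fun p : Fin n × Fin m => emb2 p.1 p.2) (j0, a)
                = (fun p : Fin n × Fin m => emb2 p.1 p.2) (j0, b) from hab)
              simp only [Prod.mk.injEq] at this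
              exact this.2
          _ ≤ V.card := Finset.card_le_card hVsub
      have hcc : colCount H (fun i => H i j) ≤ maxColCount H :=
        Finset.le_sup (Finset.mem_univ _)
      omega
    · exact hnb3 h3
  -- Step 4 : the induced permutation on block 1, and block 2 is mapped onto block 2
  set π : Fin n → Fin n := fun j => ⟨((σ (emb1 m j) : Fin (n+2*(n*m)+1)):ℕ), hσ1 j⟩ with hπ
  have hembπ : ∀ j, σ (emb1 m j) = emb1 m (π j) := fun j => Fin.ext rfl
  have hπinj : Function.Injective π := by
    intro a b hab
    have h1 : emb1 m (π a) = emb1 m (π b) := congrArg (emb1 m) hab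
    rw [← hembπ, ← hembπ] at h1
    exact emb1_inj (σ.injective h1)
  have himg1 : Finset.image (fun j : Fin n => σ (emb1 m j)) Finset.univ
      = Finset.univ.filter (fun l : Fin (n+2*(n*m)+1) => (l:ℕ) < n) := by
    apply Finset.eq_of_subset_of_card_le
    · intro l hl
      obtain ⟨j, -, rfl⟩ := Finset.mem_image.mp hl
      exact Finset.mem_filter.mpr ⟨Finset.mem_univ _, hσ1 j⟩
    · rw [card_B1, Finset.card_image_of_injective _
        (fun a b hab => emb1_inj (σ.injective hab)), Finset.card_univ, Fintype.card_fin]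
  have hσ2 : ∀ (j : Fin n) (r : Fin m), n ≤ ((σ (emb2 j r) : Fin (n+2*(n*m)+1)):ℕ)
      ∧ ((σ (emb2 j r) : Fin (n+2*(n*m)+1)):ℕ) < n + n*m := by
    intro j r
    constructor
    · by_contra hlt
      push_neg at hlt
      have hmem : σ (emb2 j r) ∈ Finset.univ.filter
          (fun l : Fin (n+2*(n*m)+1) => (l:ℕ) < n) :=
        Finset.mem_filter.mpr ⟨Finset.mem_univ _, hlt⟩
      rw [← himg1] at hmem
      obtain ⟨j', -, hj'⟩ := Finset.mem_image.mp hmem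
      have heq := σ.injective hj'
      have hval := congrArg Fin.val heq
      have h1 : ((emb1 m j' : Fin (n+2*(n*m)+1)):ℕ) = (j':ℕ) := rfl
      have h2 : ((emb2 j r : Fin (n+2*(n*m)+1)):ℕ) = n + ((j:ℕ)*m + r) := rfl
      have := j'.2
      omega
    · by_contra hge
      push_neg at hge
      have h3 := hB3iff (emb2 j r) hge
      have := emb2_val_lt j r
      omega
  have himg2 : Finset.image (fun p : Fin n × Fin m => σ (emb2 p.1 p.2)) Finset.univ
      = Finset.univ.filter
        (fun l : Fin (n+2*(n*m)+1) => n ≤ (l:ℕ) ∧ (l:ℕ) < n + n*m) := by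
    apply Finset.eq_of_subset_of_card_le
    · intro l hl
      obtain ⟨p, -, rfl⟩ := Finset.mem_image.mp hl
      exact Finset.mem_filter.mpr ⟨Finset.mem_univ _, hσ2 p.1 p.2⟩
    · rw [card_B2 hm, Finset.card_image_of_injective _
        (fun a b hab => emb2_inj (σ.injective hab)), Finset.card_univ, Fintype.card_prod,
        Fintype.card_fin, Fintype.card_fin]
  -- Step 5 : the bottom-left block of S' vanishes
  have hv0 : ∀ t : Fin k, S' (Fin.last k) t.castSucc = 0 := by
    have hvG : ∀ j0 : Fin n, ∑ t : Fin k, S' (Fin.last k) t.castSucc * G t j0 = 0 := by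
      intro j0
      have hmem : (emb2 j0 ⟨0, hm⟩ : Fin (n+2*(n*m)+1)) ∈ Finset.univ.filter
          (fun l : Fin (n+2*(n*m)+1) => n ≤ (l:ℕ) ∧ (l:ℕ) < n + n*m) := by
        refine Finset.mem_filter.mpr ⟨Finset.mem_univ _, ?_, emb2_val_lt j0 ⟨0, hm⟩⟩
        show n ≤ n + ((j0:ℕ)*m + 0); omega
      rw [← himg2] at hmem
      obtain ⟨⟨j1, r1⟩, -, hp⟩ := Finset.mem_image.mp hmem
      have hc := hcol (Fin.last k) (emb2 j1 r1)
      rw [c2_bot, hp, Fin.sum_univ_castSucc, c2_bot, mul_zero, add_zero] at hc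
      have hsum : ∑ t : Fin k, S' (Fin.last k) t.castSucc
          * construct G m t.castSucc (emb2 j0 ⟨0, hm⟩) = 0 := by
        rcases mul_eq_zero.mp hc.symm with h0 | h0
        · exact absurd h0 (hd _)
        · exact h0
      calc ∑ t : Fin k, S' (Fin.last k) t.castSucc * G t j0
          = ∑ t : Fin k, S' (Fin.last k) t.castSucc
              * construct G m t.castSucc (emb2 j0 ⟨0, hm⟩) :=
            Finset.sum_congr rfl (fun t _ => by rw [c2_top])
        _ = 0 := hsum
    have hrange : ∀ y : Fin k → F, ∃ x : Fin n → F, G.mulVec x = y := by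
      have h1 : LinearMap.range G.mulVecLin = ⊤ := by
        apply Submodule.eq_top_of_finrank_eq
        rw [← Matrix.rank, hGrank, Module.finrank_fintype_fun_eq_card, Fintype.card_fin]
      intro y
      have h2 : y ∈ LinearMap.range G.mulVecLin := by rw [h1]; trivial
      obtain ⟨x, hx⟩ := h2
      exact ⟨x, hx⟩
    intro t
    obtain ⟨x, hx⟩ := hrange (Pi.single t 1)
    set v : Fin k → F := fun t => S' (Fin.last k) t.castSucc with hvdef
    have h2 : ∑ i, v i * (G.mulVec x) i = 0 := by
      have e : ∀ i, v i * (G.mulVec x) i = ∑ j0, v i * G i j0 * x j0 := by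
        intro i
        show v i * dotProduct (fun j0 => G i j0) x = _
        rw [dotProduct, Finset.mul_sum]
        exact Finset.sum_congr rfl (fun j0 _ => by ring)
      rw [Finset.sum_congr rfl (fun i _ => e i), Finset.sum_comm]
      have e2 : ∀ j0, ∑ i, v i * G i j0 * x j0 = (∑ i, v i * G i j0) * x j0 := by
        intro j0; rw [Finset.sum_mul]
      rw [Finset.sum_congr rfl (fun j0 _ => e2 j0)]
      simp only [hvdef, hvG, zero_mul, Finset.sum_const_zero]
    rw [hx] at h2
    simp only [Pi.single_apply, mul_ite, mul_one, mul_zero, Finset.sum_ite_eq',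
      Finset.mem_univ, if_true] at h2
    exact h2
  -- Step 6 : conclude
  have hdB1 : ∀ j : Fin n, d (emb1 m j) = μ⁻¹ := by
    intro j
    have hc := hcol (Fin.last k) (emb1 m j)
    rw [c1_bot, hembπ, Fin.sum_univ_castSucc, c1_bot] at hc
    simp only [hv0, zero_mul, Finset.sum_const_zero, zero_add, mul_one] at hc
    rw [← hμdef] at hc
    have h1 : μ * d (emb1 m j) = 1 := by rw [mul_comm]; exact hc.symm
    exact eq_inv_of_mul_eq_one_right h1
  have hHG : ∀ (i : Fin k) (j : Fin n),
      H i j = ∑ t : Fin k, (μ⁻¹ * S' i.castSucc t.castSucc) * G t (π j) := by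
    intro i j
    have hc := hcol i.castSucc (emb1 m j)
    rw [c1_top, hembπ, Fin.sum_univ_castSucc, c1_bot, hdB1] at hc
    simp only [c1_top, hS'tb, zero_mul, add_zero, mul_one] at hc
    rw [hc, Finset.mul_sum]
    exact Finset.sum_congr rfl (fun t _ => by ring)
  set S0 : Matrix (Fin k) (Fin k) F := fun a b => μ⁻¹ * S' a.castSucc b.castSucc with hS0
  set πE : Equiv.Perm (Fin n) :=
    Equiv.ofBijective π (Finite.injective_iff_bijective.mp hπinj) with hπE
  have hπEapp : ∀ j, πE j = π j := fun j => rfl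
  set P0 : Matrix (Fin n) (Fin n) F := fun a b => if a = πE b then 1 else 0 with hP0
  refine ⟨S0, P0, ?_, ⟨πE, fun a b => rfl⟩, ?_⟩
  · set T0 : Matrix (Fin k) (Fin k) F := fun a b => μ * T' a.castSucc b.castSucc with hT0
    have hST0 : S0 * T0 = 1 := by
      ext a b
      rw [Matrix.mul_apply]
      have e : ∀ t : Fin k, S0 a t * T0 t b
          = μ⁻¹ * μ * (S' a.castSucc t.castSucc * T' t.castSucc b.castSucc) := by
        intro t
        show (μ⁻¹ * S' a.castSucc t.castSucc) * (μ * T' t.castSucc b.castSucc) = _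
        ring
      rw [Finset.sum_congr rfl (fun t _ => e t), ← Finset.mul_sum,
        inv_mul_cancel₀ hμ, one_mul]
      have e2 : ∑ t : Fin k, S' a.castSucc t.castSucc * T' t.castSucc b.castSucc
          = (S' * T') a.castSucc b.castSucc := by
        rw [Matrix.mul_apply, Fin.sum_univ_castSucc, hS'tb, zero_mul, add_zero]
      rw [e2, hST, Matrix.one_apply, Matrix.one_apply]
      simp [Fin.castSucc_inj]
    rw [Matrix.isUnit_iff_isUnit_det]
    exact Matrix.isUnit_det_of_right_inverse hST0
  · ext i j
    have key : (S0 * G * P0) i j = ∑ t, S0 i t * G t (πE j) := by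
      rw [Matrix.mul_apply]
      simp only [hP0, mul_ite, mul_one, mul_zero]
      rw [Finset.sum_ite_eq' Finset.univ (πE j) (fun t => (S0 * G) i t),
        if_pos (Finset.mem_univ _), Matrix.mul_apply]
    rw [key, hπEapp]
    exact (hHG i j).symm

end Rev

/-- `(G, H)` is in PCE if and only if `(G', H')` is in LCE. -/
theorem stmt12 (q k n m : ℕ) (hq : IsPrimePow q) (hk : 0 < k) (hn : 0 < n) (hm : 0 < m)
    (F : Type*) [Field F] [Fintype F] (hF : Fintype.card F = q)
    (G H : Matrix (Fin k) (Fin n) F)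
    (hGnz : ∀ j, (fun i => G i j) ≠ 0)
    (hHnz : ∀ j, (fun i => H i j) ≠ 0)
    (hGrank : G.rank = k)
    (hmG : maxColCount G < m) (hmH : maxColCount H < m) :
    PCE G H ↔ LCE (construct G m) (construct H m) := by
  constructor
  · exact fun h => forward_dir hm G H h
  · exact fun h => reverse_dir hk hn hm G H hGnz hHnz hGrank hmG hmH h
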